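/- arXiv:math/0406415 — 6 statements merged into one kernel-verified Lean document; each statement's English description precedes it below -/
import Mathlib

section
/- Let A be a domain over a field k of characteristic p > 0, and let D be a nontrivial locally finite iterative higher derivation on A (associated to an exponential map φ). Let x ∈ A have minimal positive φ-degree n, where deg_φ(a) = max{i : Dⁱ(a) ≠ 0}. Then n is a power of p, and Dⁱ(x) = 0 whenever i > 1 is not a power of p. -/
/-- If all middle binomial coefficients of `N` are divisible by the prime `p`,
then `N` is a power of `p`. -/
lemma aux_pow_of_dvd_choose (p : ℕ) (hp : p.Prime) :
    ∀ N : ℕ, 0 < N → (∀ j, 0 < j → j < N → p ∣ N.choose j) → ∃ m, N = p ^ m := by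
  intro N
  induction N using Nat.strong_induction_on with
  | _ N ih =>
    intro hN h
    rcases eq_or_lt_of_le (show 1 ≤ N from hN) with h1 | h1
    · exact ⟨0, by rw [pow_zero]; omega⟩
    have hpN : p ∣ N := by simpa using h 1 one_pos h1
    obtain ⟨M, rfl⟩ := hpN
    have hp2 := hp.two_le
    have hM : 0 < M := by
      rcases Nat.eq_zero_or_pos M with h0 | h0
      · subst h0; simp at hN
      · exact h0
    haveI : Fact p.Prime := ⟨hp⟩
    have key : ∀ j', 0 < j' → j' < M → p ∣ M.choose j' := by
      intro j' hj1 hj2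
      have hdvd : p ∣ (p * M).choose (p * j') := by
        refine h (p * j') (by positivity) (by nlinarith)
      have lucas := @Choose.choose_modEq_choose_mod_mul_choose_div_nat (p * M) (p * j') p ⟨hp⟩
      simp only [Nat.mul_mod_right, Nat.mul_div_cancel_left _ hp.pos, Nat.choose_self,
        Nat.choose_zero_right, one_mul] at lucas
      exact (Nat.modEq_zero_iff_dvd).mp
        (lucas.symm.trans ((Nat.modEq_zero_iff_dvd).mpr hdvd))
    obtain ⟨m, hm⟩ := ih M (by nlinarith) hM key
    exact ⟨m + 1, by rw [hm, pow_succ']⟩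

/-- Characteristic `p > 0`: for a nontrivial locally finite iterative higher
derivation `D` on a domain `A`, if `x` has minimal positive `φ`-degree `n`
(where `deg_φ(a) = max {i : Dⁱ(a) ≠ 0}`), then `n` is a power of `p` and
`Dⁱ(x) = 0` whenever `i > 1` is not a power of `p`. -/
theorem stmt_6 {k A : Type*} [Field k] [CommRing A] [IsDomain A] [Algebra k A]
    (p : ℕ) (hp : p.Prime) [CharP k p]
    (D : ℕ → A →ₗ[k] A)
    (hD0 : D 0 = LinearMap.id)
    (hLeib : ∀ (n : ℕ) (a b : A),
      D n (a * b) = ∑ ij ∈ Finset.HasAntidiagonal.antidiagonal n, D ij.1 a * D ij.2 b)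
    (hiter : ∀ (i j : ℕ) (a : A), D i (D j a) = (i + j).choose i • D (i + j) a)
    (hlf : ∀ a : A, ∃ N, ∀ i ≥ N, D i a = 0)
    (x : A) (n : ℕ) (hnpos : 0 < n) (hx : D n x ≠ 0) (hxmax : ∀ i > n, D i x = 0)
    (hmin : ∀ (a : A) (m : ℕ), 0 < m → D m a ≠ 0 → (∀ i > m, D i a = 0) → n ≤ m) :
    (∃ m : ℕ, n = p ^ m) ∧
      (∀ i : ℕ, 1 < i → (¬ ∃ m : ℕ, i = p ^ m) → D i x = 0) := by
  classical
  haveI : CharP A p := charP_of_injective_algebraMap (algebraMap k A).injective p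
  -- Key lemma: for 0 < i < n, D i x is a "constant" (killed by all D j, j > 0).
  have L : ∀ i, 0 < i → i < n → ∀ j, 0 < j → D j (D i x) = 0 := by
    intro i hi0 hin j hj
    by_contra hne
    set P : ℕ → Prop := fun m => D m (D i x) ≠ 0 with hP
    -- bound: for m > n - i we get zero
    have hbd : ∀ m, m > n - i → D m (D i x) = 0 := by
      intro m hm
      rw [hiter m i x, hxmax (m + i) (by omega), smul_zero]
    have hjle : j ≤ n - i := by
      by_contra hc
      exact hne (hbd j (by omega))
    set m := Nat.findGreatest P n with hmdef
    have hmge : j ≤ m := Nat.le_findGreatest (by omega) hne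
    have hmpos : 0 < m := lt_of_lt_of_le hj hmge
    have hPm : P m := Nat.findGreatest_of_ne_zero rfl (by omega)
    have hmle : m ≤ n - i := by
      by_contra hc
      exact hPm (hbd m (by omega))
    have hzero : ∀ i' > m, D i' (D i x) = 0 := by
      intro i' hi'
      by_cases h' : i' ≤ n
      · by_contra hne'
        exact Nat.findGreatest_is_greatest hi' h' hne'
      · exact hbd i' (by omega)
    have := hmin (D i x) m hmpos hPm hzero
    omega
  -- Divisibility of middle binomials of n
  have hdvd : ∀ i, 0 < i → i < n → p ∣ n.choose i := by
    intro i hi0 hin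
    have h1 := hiter (n - i) i x
    rw [L i hi0 hin (n - i) (by omega), show n - i + i = n by omega] at h1
    have h2 : ((n.choose (n - i) : ℕ) : A) * D n x = 0 := by
      rw [← nsmul_eq_mul, ← h1]
    have hc : ((n.choose (n - i) : ℕ) : A) = 0 := by
      rcases mul_eq_zero.mp h2 with h | h
      · exact h
      · exact absurd h hx
    have := (CharP.cast_eq_zero_iff A p _).mp hc
    rwa [Nat.choose_symm (le_of_lt hin)] at this
  obtain ⟨m, hm⟩ := aux_pow_of_dvd_choose p hp n hnpos hdvd
  refine ⟨⟨m, hm⟩, ?_⟩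
  intro i hi1 hnp
  rcases lt_trichotomy i n with hlt | heq | hgt
  · by_contra hDi
    refine hnp (aux_pow_of_dvd_choose p hp i (by omega) ?_)
    intro j hj0 hji
    have h1 := hiter j (i - j) x
    rw [L (i - j) (by omega) (by omega) j hj0, show j + (i - j) = i by omega] at h1
    have h2 : ((i.choose j : ℕ) : A) * D i x = 0 := by
      rw [← nsmul_eq_mul, ← h1]
    rcases mul_eq_zero.mp h2 with h | h
    · exact (CharP.cast_eq_zero_iff A p _).mp h
    · exact absurd h hDi
  · exact absurd ⟨m, heq ▸ hm⟩ hnp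
  · exact hxmax i hgt
end

section
/- Let A be a domain over a field k, φ a nontrivial exponential map on A with associated higher derivation D, and x ∈ A an element of minimal positive φ-degree n. Then for every nonzero a ∈ A, n divides deg_φ(a). -/
/-- If the base-`p` digit of `m` at position `t` is nonzero, then `p` does not divide
`m.choose (p ^ t)` (a consequence of Lucas's theorem). -/
theorem aux_lucas {p : ℕ} (hp : p.Prime) :
    ∀ (t m : ℕ), (m / p ^ t) % p ≠ 0 → ¬ p ∣ m.choose (p ^ t) := by
  haveI : Fact p.Prime := ⟨hp⟩
  intro t
  induction t with
  | zero =>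
    intro m hm hdvd
    simp only [pow_zero, Nat.div_one] at hm
    rw [pow_zero, Nat.choose_one_right] at hdvd
    exact hm (Nat.dvd_iff_mod_eq_zero.mp hdvd)
  | succ t ih =>
    intro m hm hdvd
    have hcong := Choose.choose_modEq_choose_mod_mul_choose_div_nat (n := m) (k := p ^ (t + 1)) (p := p)
    have h1 : p ^ (t + 1) % p = 0 := by
      simp [pow_succ, Nat.mul_mod_left]
    have h2 : p ^ (t + 1) / p = p ^ t := by
      rw [pow_succ, Nat.mul_div_cancel _ hp.pos]
    rw [h1, h2, Nat.choose_zero_right, one_mul] at hcong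
    have hm' : (m / p / p ^ t) % p ≠ 0 := by
      rw [Nat.div_div_eq_div_mul, ← pow_succ']
      exact hm
    apply ih (m / p) hm'
    have : m.choose (p ^ (t + 1)) % p = (m / p).choose (p ^ t) % p := hcong
    rw [Nat.dvd_iff_mod_eq_zero, ← this, ← Nat.dvd_iff_mod_eq_zero]
    exact hdvd

/-- If `x` has minimal positive `φ`-degree `n` for a nontrivial exponential map
(equivalently, locally finite iterative higher derivation `D`) on a domain `A`,
then `n` divides the `φ`-degree of every nonzero element of `A`. -/
theorem stmt_7 {k A : Type*} [Field k] [CommRing A] [IsDomain A] [Algebra k A]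
    (D : ℕ → A →ₗ[k] A)
    (hD0 : D 0 = LinearMap.id)
    (hLeib : ∀ (n : ℕ) (a b : A),
      D n (a * b) = ∑ ij ∈ Finset.HasAntidiagonal.antidiagonal n, D ij.1 a * D ij.2 b)
    (hiter : ∀ (i j : ℕ) (a : A), D i (D j a) = (i + j).choose i • D (i + j) a)
    (hlf : ∀ a : A, ∃ N, ∀ i ≥ N, D i a = 0)
    (x : A) (n : ℕ) (hnpos : 0 < n) (hx : D n x ≠ 0) (hxmax : ∀ i > n, D i x = 0)
    (hmin : ∀ (a : A) (m : ℕ), 0 < m → D m a ≠ 0 → (∀ i > m, D i a = 0) → n ≤ m) :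
    ∀ (a : A), a ≠ 0 → ∀ d : ℕ, D d a ≠ 0 → (∀ i > d, D i a = 0) → n ∣ d := by
  -- Key extraction lemma: if `b` has degree `d` and the binomial coefficient
  -- `d.choose j` is nonzero in `A`, then `D j b` has degree `d - j`, whence `n ≤ d - j`.
  have key : ∀ (d j : ℕ) (b : A), j ≤ d → ((d.choose j : ℕ) : A) ≠ 0 →
      D d b ≠ 0 → (∀ i > d, D i b = 0) → 0 < d - j → n ≤ d - j := by
    intro d j b hj hc hdb htop hpos
    refine hmin (D j b) (d - j) hpos ?_ ?_
    · have h1 := hiter (d - j) j b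
      rw [Nat.sub_add_cancel hj] at h1
      rw [h1, Nat.choose_symm hj, nsmul_eq_mul]
      exact mul_ne_zero hc hdb
    · intro i hi
      rw [hiter i j b, htop (i + j) (by omega), smul_zero]
  intro a _ d hda htop
  obtain ⟨q, hq⟩ := CharP.exists A
  rcases CharP.char_is_prime_or_zero A q with hp | h0
  · -- characteristic `p` prime case
    by_contra hnd
    have hd0 : d ≠ 0 := by rintro rfl; exact hnd (dvd_zero n)
    set t := padicValNat q n with ht
    set t' := padicValNat q d with ht'
    haveI : Fact q.Prime := ⟨hp⟩
    have hqn : q ^ t ∣ n := pow_padicValNat_dvd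
    have hqd : q ^ t' ∣ d := pow_padicValNat_dvd
    -- the digit of `n` at position `t` is nonzero
    have hdig_n : (n / q ^ t) % q ≠ 0 := by
      intro h
      have : q ∣ n / q ^ t := Nat.dvd_iff_mod_eq_zero.mpr h
      have : q ^ (t + 1) ∣ n := by
        rw [pow_succ]
        exact Nat.mul_dvd_of_dvd_div hqn this
      exact pow_succ_padicValNat_not_dvd hnpos.ne' this
    have hdig_d : (d / q ^ t') % q ≠ 0 := by
      intro h
      have : q ∣ d / q ^ t' := Nat.dvd_iff_mod_eq_zero.mpr h
      have : q ^ (t' + 1) ∣ d := by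
        rw [pow_succ]
        exact Nat.mul_dvd_of_dvd_div hqd this
      exact pow_succ_padicValNat_not_dvd hd0 this
    -- `n = q ^ t`
    have hqt_le : q ^ t ≤ n := Nat.le_of_dvd hnpos hqn
    have hqt'_le : q ^ t' ≤ d := Nat.le_of_dvd (Nat.pos_of_ne_zero hd0) hqd
    have hcast_n : ((n.choose (n - q ^ t) : ℕ) : A) ≠ 0 := by
      rw [Nat.choose_symm hqt_le, Ne, CharP.cast_eq_zero_iff A q]
      exact aux_lucas hp t n hdig_n
    have hn_le : n ≤ q ^ t := by
      have := key n (n - q ^ t) x (Nat.sub_le _ _) hcast_n hx hxmax ?_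
      · rwa [Nat.sub_sub_self hqt_le] at this
      · rw [Nat.sub_sub_self hqt_le]; exact pow_pos hp.pos t
    have hn_eq : n = q ^ t := le_antisymm hn_le hqt_le
    -- `t' < t` since `n = q ^ t` does not divide `d`
    have htt : t' < t := by
      by_contra hle
      push_neg at hle
      exact hnd (hn_eq ▸ dvd_trans (pow_dvd_pow q hle) hqd)
    -- extract an element of degree `q ^ t' < n`, contradiction
    have hlt : n ≤ q ^ t' := by
      have hcast_d : ((d.choose (d - q ^ t') : ℕ) : A) ≠ 0 := by
        rw [Nat.choose_symm hqt'_le, Ne, CharP.cast_eq_zero_iff A q]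
        exact aux_lucas hp t' d hdig_d
      have := key d (d - q ^ t') a (Nat.sub_le _ _) hcast_d hda htop ?_
      · rwa [Nat.sub_sub_self hqt'_le] at this
      · rw [Nat.sub_sub_self hqt'_le]; exact pow_pos hp.pos t'
    have : q ^ t' < q ^ t := Nat.pow_lt_pow_right hp.one_lt htt
    omega
  · -- characteristic zero case
    subst h0
    haveI : CharZero A := CharP.charP_to_charZero A
    by_contra hnd
    have hr_pos : 0 < d % n := Nat.pos_of_ne_zero fun h => hnd (Nat.dvd_iff_mod_eq_zero.mpr h)
    have hr_lt : d % n < n := Nat.mod_lt _ hnpos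
    have hr_le : d % n ≤ d := Nat.mod_le _ _
    have := key d (d - d % n) a (Nat.sub_le _ _) ?_ hda htop ?_
    · rw [Nat.sub_sub_self hr_le] at this; omega
    · rw [Ne, Nat.cast_eq_zero]
      exact (Nat.choose_pos (Nat.sub_le _ _)).ne'
    · rw [Nat.sub_sub_self hr_le]; exact hr_pos
end

section
/- Let A be a domain over a field k, φ a nontrivial exponential map on A, x ∈ A of minimal positive φ-degree n, and c = Dⁿ(x) (the leading U-coefficient of φ(x)), which lies in A^φ. Then A is contained in the subring A^φ[c⁻¹][x] of Frac(A), i.e., every element of A is a polynomial in x with coefficients in the localization of A^φ at c. -/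
/-- An exponential map on a `k`-algebra `A`. -/
def IsExpMap {k A : Type*} [CommSemiring k] [CommRing A] [Algebra k A]
    (φ : A →ₐ[k] Polynomial A) : Prop :=
  (∀ a : A, (φ a).eval 0 = a) ∧
  (∀ a : A, (φ a).map φ.toRingHom =
      Polynomial.eval₂ (Polynomial.C.comp Polynomial.C)
        (Polynomial.X + Polynomial.C Polynomial.X) (φ a))

/-!
Write `Dᵢ a` for the `i`-th coefficient of `φ a`. The exponential-map axiom says
`D_l ∘ Dᵢ = C(i + l, i) D_{i+l}`, so `D_m a` is `φ`-invariant when `m = deg φ(a)`, and `D_{m-l} a`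
has degree exactly `l` whenever `C(m, l) ≠ 0` in `A`. Take `l = pᵗ`, the exact power of the
exponential characteristic `p` dividing `m`: by Lucas's theorem `C(m, pᵗ) ≢ 0 mod p`, so minimality
of `n` gives `n ≤ pᵗ`. Applied to `x` itself this forces `n` to be a power of `p`, whence `n ∣ m`.
Writing `m = n t`, the element `cᵗ a - (D_m a) xᵗ` has smaller degree, and induction on the degree
expresses `c^N a` as a polynomial in `x` with invariant coefficients.
-/

open Polynomial

theorem Polynomial.natDegree_sub_lt_of_coeff_eq {R : Type*} [Ring R] {p q : R[X]} {m : ℕ}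
    (hm : 0 < m) (hp : p.natDegree ≤ m) (hq : q.natDegree ≤ m) (h : p.coeff m = q.coeff m) :
    (p - q).natDegree < m := by
  have hle : (p - q).natDegree ≤ m := max_self m ▸ natDegree_sub_le_of_le hp hq
  refine hle.lt_of_ne fun hpq => hm.ne' ?_
  have hzero : (p - q).leadingCoeff = 0 := by
    rw [leadingCoeff, hpq, coeff_sub, h, sub_self]
  rw [← hpq, leadingCoeff_eq_zero.mp hzero, natDegree_zero]

theorem Nat.cast_choose_ordProj_ne_zero {R : Type*} [Semiring R] {p : ℕ} [hR : ExpChar R p]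
    {m : ℕ} (hm : m ≠ 0) : (m.choose (ordProj[p] m) : R) ≠ 0 := by
  cases hR with
  | zero => simpa using hm
  | prime hp =>
    have := Fact.mk hp
    rw [ne_eq, CharP.cast_eq_zero_iff R p]
    -- Lucas: `(pᵗ u).choose pᵗ ≡ u`, and `p ∤ u` for `pᵗ` the exact power of `p` in `m`.
    have hlucas : m.choose (ordProj[p] m) ≡ ordCompl[p] m [MOD p] := by
      have := Choose.choose_pow_mul_pow_mul_modEq_choose_nat (p := p) (k := m.factorization p)
        (a := ordCompl[p] m) (b := 1)
      rwa [mul_one, Nat.choose_one_right, Nat.ordProj_mul_ordCompl_eq_self] at this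
    exact fun hdvd => Nat.not_dvd_ordCompl hp hm
      (Nat.modEq_zero_iff_dvd.mp (hlucas.symm.trans (Nat.modEq_zero_iff_dvd.mpr hdvd)))

theorem Nat.dvd_of_le_ordProj {p n m : ℕ} (hp : p = 1 ∨ p.Prime) (hn0 : n ≠ 0)
    (hn : n ≤ ordProj[p] n) (hnm : n ≤ ordProj[p] m) : n ∣ m := by
  have hn_eq : n = ordProj[p] n := hn.antisymm (Nat.ordProj_le p hn0)
  rcases hp with rfl | hp
  · rw [hn_eq, one_pow]
    exact one_dvd m
  · refine dvd_trans ?_ (Nat.ordProj_dvd m p)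
    rw [hn_eq] at hnm ⊢
    exact pow_dvd_pow p ((Nat.pow_le_pow_iff_right hp.one_lt).mp hnm)

namespace IsExpMap

variable {k A : Type*} [CommSemiring k] [CommRing A] [Algebra k A] {φ : A →ₐ[k] A[X]}
  (hφ : IsExpMap φ)
include hφ

theorem coeff_map_coeff (a : A) (i l : ℕ) :
    (φ ((φ a).coeff i)).coeff l = ((i + l).choose i : A) * (φ a).coeff (i + l) := by
  have h := congrArg (fun q : A[X][X] => (q.coeff i).coeff l) (hφ.2 a)
  simp only [coeff_map] at h
  rw [show φ ((φ a).coeff i) = φ.toRingHom ((φ a).coeff i) from rfl, h, eval₂_eq_sum,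
    Polynomial.sum, finsetSum_coeff, finsetSum_coeff, Finset.sum_eq_single (i + l)]
  · simp only [RingHom.coe_comp, Function.comp_apply, coeff_C_mul, coeff_X_add_C_pow,
      Nat.add_sub_cancel_left]
    simp [mul_comm]
  · intro j _ hj
    simp only [RingHom.coe_comp, Function.comp_apply, coeff_C_mul, coeff_X_add_C_pow,
      coeff_mul_natCast, coeff_X_pow]
    rcases lt_or_ge j i with hji | hji
    · simp [Nat.choose_eq_zero_of_lt hji]
    · simp [show l ≠ j - i by omega]
  · intro hns
    simp [notMem_support_iff.mp hns]

theorem map_eq_C_of_natDegree_eq_zero {a : A} (h : (φ a).natDegree = 0) : φ a = C a := by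
  rw [eq_C_of_natDegree_eq_zero h, coeff_zero_eq_eval_zero, hφ.1 a]

theorem map_leadingCoeff (a : A) : φ (φ a).leadingCoeff = C (φ a).leadingCoeff := by
  ext l
  rw [leadingCoeff, hφ.coeff_map_coeff, coeff_C]
  rcases Nat.eq_zero_or_pos l with rfl | hl
  · simp
  · rw [if_neg hl.ne', coeff_eq_zero_of_natDegree_lt (by omega), mul_zero]

theorem natDegree_map_sub_lt {a x : A} {t : ℕ} (hpos : 0 < (φ a).natDegree)
    (ht : (φ a).natDegree = (φ x).natDegree * t) :
    (φ ((φ x).leadingCoeff ^ t * a - (φ a).leadingCoeff * x ^ t)).natDegree <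
      (φ a).natDegree := by
  rw [map_sub, map_mul, map_mul, map_pow, map_pow, hφ.map_leadingCoeff, hφ.map_leadingCoeff,
    ← C_pow]
  refine natDegree_sub_lt_of_coeff_eq hpos (natDegree_C_mul_le _ _)
    ((natDegree_C_mul_le _ _).trans ?_) ?_
  · rw [ht, mul_comm]; exact natDegree_pow_le
  · rw [coeff_C_mul, coeff_C_mul, ← leadingCoeff, ht, mul_comm _ t,
      coeff_pow_of_natDegree_le le_rfl]
    exact mul_comm _ _

variable [IsDomain A]

theorem natDegree_map_coeff_natDegree_sub {a : A} (ha : φ a ≠ 0) {l : ℕ}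
    (hl : l ≤ (φ a).natDegree) (hch : ((φ a).natDegree.choose l : A) ≠ 0) :
    (φ ((φ a).coeff ((φ a).natDegree - l))).natDegree = l := by
  refine le_antisymm (natDegree_le_iff_coeff_eq_zero.mpr fun j hj => ?_)
    (le_natDegree_of_ne_zero ?_)
  · rw [hφ.coeff_map_coeff, coeff_eq_zero_of_natDegree_lt (by omega), mul_zero]
  · rw [hφ.coeff_map_coeff, Nat.sub_add_cancel hl, Nat.choose_symm hl]
    exact mul_ne_zero hch (leadingCoeff_ne_zero.mpr ha)

variable {x : A} (hxpos : 0 < (φ x).natDegree)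
  (hmin : ∀ a : A, φ a ≠ C a → (φ x).natDegree ≤ (φ a).natDegree)
include hxpos hmin

theorem natDegree_dvd_natDegree (a : A) : (φ x).natDegree ∣ (φ a).natDegree := by
  obtain ⟨p, hp⟩ := ExpChar.exists A
  have hle : ∀ b : A, (φ b).natDegree ≠ 0 → (φ x).natDegree ≤ ordProj[p] (φ b).natDegree := by
    intro b hb
    have hdeg := hφ.natDegree_map_coeff_natDegree_sub (fun h => hb (by rw [h, natDegree_zero]))
      (Nat.ordProj_le p hb) (Nat.cast_choose_ordProj_ne_zero hb)
    refine hdeg ▸ hmin _ fun hC => ?_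
    rw [hC, natDegree_C] at hdeg
    exact (pow_pos (expChar_pos A p) _).ne' hdeg.symm
  rcases Nat.eq_zero_or_pos (φ a).natDegree with h0 | hpos
  · exact h0 ▸ dvd_zero _
  · exact Nat.dvd_of_le_ordProj ((expChar_is_prime_or_one A p).symm) hxpos.ne'
      (hle x hxpos.ne') (hle a hpos.ne')

theorem exists_pow_leadingCoeff_mul_eq_eval (a : A) :
    ∃ (N : ℕ) (q : A[X]), (∀ i, φ (q.coeff i) = C (q.coeff i)) ∧
      (φ x).leadingCoeff ^ N * a = q.eval x := by
  induction h : (φ a).natDegree using Nat.strong_induction_on generalizing a with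
  | _ m ih =>
  by_cases hinv : φ a = C a
  · exact ⟨0, C a, fun i => by rw [coeff_C]; split_ifs <;> simp [hinv], by simp⟩
  have hpos : 0 < (φ a).natDegree :=
    Nat.pos_of_ne_zero fun h0 => hinv (hφ.map_eq_C_of_natDegree_eq_zero h0)
  obtain ⟨t, ht⟩ := hφ.natDegree_dvd_natDegree hxpos hmin a
  obtain ⟨N, q, hq, hb⟩ := ih _ (h ▸ hφ.natDegree_map_sub_lt hpos ht) _ rfl
  refine ⟨N + t, q + C ((φ x).leadingCoeff ^ N * (φ a).leadingCoeff) * X ^ t, fun i => ?_, ?_⟩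
  · rw [coeff_add, coeff_C_mul_X_pow, map_add, hq]
    split_ifs
    · rw [map_mul, map_pow, hφ.map_leadingCoeff, hφ.map_leadingCoeff, C_add, C_mul, C_pow]
    · simp
  · rw [eval_add, eval_mul_X_pow, eval_C, ← hb]
    ring

end IsExpMap

theorem stmt_8_general {k A : Type*} [Field k] [CommRing A] [IsDomain A] [Algebra k A]
    (φ : A →ₐ[k] Polynomial A) (hφ : IsExpMap φ)
    (x : A) (hxpos : 0 < (φ x).natDegree)
    (hmin : ∀ a : A, φ a ≠ Polynomial.C a → (φ x).natDegree ≤ (φ a).natDegree)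
    (c : A) (hc : c = (φ x).coeff (φ x).natDegree) :
    ∀ a : A, ∃ (N : ℕ) (q : Polynomial A),
      (∀ i, φ (q.coeff i) = Polynomial.C (q.coeff i)) ∧ c ^ N * a = q.eval x :=
  hc ▸ hφ.exists_pow_leadingCoeff_mul_eq_eval hxpos hmin

/-- If `x` has minimal positive `φ`-degree `n` for a nontrivial exponential map `φ`
on a domain `A`, and `c = Dⁿ(x)` is the leading `U`-coefficient of `φ(x)`, then
`A ⊆ A^φ[c⁻¹][x]`: every `a ∈ A` satisfies `cᴺ a = Σ bᵢ xⁱ` with all `bᵢ ∈ A^φ`. -/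
theorem stmt_8 {k A : Type*} [Field k] [CommRing A] [IsDomain A] [Algebra k A]
    (φ : A →ₐ[k] Polynomial A) (hφ : IsExpMap φ)
    (hnontriv : ∃ a : A, φ a ≠ Polynomial.C a)
    (x : A) (hxpos : 0 < (φ x).natDegree)
    (hmin : ∀ a : A, φ a ≠ Polynomial.C a → (φ x).natDegree ≤ (φ a).natDegree)
    (c : A) (hc : c = (φ x).coeff (φ x).natDegree) :
    ∀ a : A, ∃ (N : ℕ) (q : Polynomial A),
      (∀ i, φ (q.coeff i) = Polynomial.C (q.coeff i)) ∧ c ^ N * a = q.eval x :=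
  stmt_8_general φ hφ x hxpos hmin c hc
end

section
/- Let k be a field, n ≥ 2, h ∈ k[X] with h(0) ≠ 0, and R = k[X,Y,Z]/(XⁿY - Z² - h(X)Z) with x, y, z the images of X, Y, Z. For any polynomial f ∈ k[X], the assignment x ↦ x, z ↦ z + xⁿ f(x) U, y ↦ x^{-n}((z + xⁿf(x)U)² + h(x)(z + xⁿf(x)U)) = y + (2z + h(x))f(x)U + xⁿf(x)²U² defines an exponential map φ : R → R[U]. -/
noncomputable section
set_option maxHeartbeats 1000000
set_option synthInstance.maxHeartbeats 200000

/-- The defining relation `XⁿY - Z² - h(X)Z` in `k[X,Y,Z]` (variables `X 0, X 1, X 2`). -/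
def danRel (k : Type*) [Field k] (n : ℕ) (h : Polynomial k) : MvPolynomial (Fin 3) k :=
  MvPolynomial.X 0 ^ n * MvPolynomial.X 1 - MvPolynomial.X 2 ^ 2
    - Polynomial.aeval (MvPolynomial.X 0 : MvPolynomial (Fin 3) k) h * MvPolynomial.X 2

/-- The coordinate ring `R = k[X,Y,Z]/(XⁿY - Z² - h(X)Z)` of a Danielewski surface. -/
abbrev DanRing (k : Type*) [Field k] (n : ℕ) (h : Polynomial k) : Type _ :=
  MvPolynomial (Fin 3) k ⧸ Ideal.span {danRel k n h}

/-- The image `x` of `X` in `R`. -/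
def dx (k : Type*) [Field k] (n : ℕ) (h : Polynomial k) : DanRing k n h :=
  Ideal.Quotient.mk _ (MvPolynomial.X 0)

/-- The image `y` of `Y` in `R`. -/
def dy (k : Type*) [Field k] (n : ℕ) (h : Polynomial k) : DanRing k n h :=
  Ideal.Quotient.mk _ (MvPolynomial.X 1)

/-- The image `z` of `Z` in `R`. -/
def dz (k : Type*) [Field k] (n : ℕ) (h : Polynomial k) : DanRing k n h :=
  Ideal.Quotient.mk _ (MvPolynomial.X 2)

section Aux

open Polynomial

variable (k : Type*) [Field k] (n : ℕ) (h f : Polynomial k)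

/-- auxiliary substitution map -/
def danPsi : MvPolynomial (Fin 3) k →ₐ[k] Polynomial (DanRing k n h) :=
  MvPolynomial.aeval ![C (dx k n h),
    C (dy k n h) + C ((2 * dz k n h + aeval (dx k n h) h) * aeval (dx k n h) f) * X
      + C (dx k n h ^ n * aeval (dx k n h) f ^ 2) * X ^ 2,
    C (dz k n h) + C (dx k n h ^ n * aeval (dx k n h) f) * X]

lemma danPsi_X0 : danPsi k n h f (MvPolynomial.X 0) = C (dx k n h) := by
  simp only [danPsi, MvPolynomial.aeval_X, Matrix.cons_val_zero, Matrix.cons_val_one,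
    Matrix.head_cons, Matrix.cons_val_two, Matrix.tail_cons]

lemma danPsi_X1 : danPsi k n h f (MvPolynomial.X 1) =
    C (dy k n h) + C ((2 * dz k n h + aeval (dx k n h) h) * aeval (dx k n h) f) * X
      + C (dx k n h ^ n * aeval (dx k n h) f ^ 2) * X ^ 2 := by
  simp only [danPsi, MvPolynomial.aeval_X, Matrix.cons_val_zero, Matrix.cons_val_one,
    Matrix.head_cons, Matrix.cons_val_two, Matrix.tail_cons]

lemma danPsi_X2 : danPsi k n h f (MvPolynomial.X 2) =
    C (dz k n h) + C (dx k n h ^ n * aeval (dx k n h) f) * X := by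
  simp only [danPsi, MvPolynomial.aeval_X, Matrix.cons_val_zero, Matrix.cons_val_one,
    Matrix.head_cons, Matrix.cons_val_two, Matrix.tail_cons]

lemma dan_rel : (dx k n h) ^ n * dy k n h
    = (dz k n h) ^ 2 + aeval (dx k n h) h * dz k n h := by
  have h1 : (Ideal.Quotient.mkₐ k (Ideal.span {danRel k n h})) (danRel k n h) = 0 := by
    rw [Ideal.Quotient.mkₐ_eq_mk, Ideal.Quotient.eq_zero_iff_mem]
    exact Ideal.subset_span rfl
  rw [danRel, map_sub, map_sub, map_mul, map_pow, map_mul, map_pow,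
    ← Polynomial.aeval_algHom_apply] at h1
  rw [show dx k n h = (Ideal.Quotient.mkₐ k (Ideal.span {danRel k n h})) (MvPolynomial.X 0) from rfl,
    show dy k n h = (Ideal.Quotient.mkₐ k (Ideal.span {danRel k n h})) (MvPolynomial.X 1) from rfl,
    show dz k n h = (Ideal.Quotient.mkₐ k (Ideal.span {danRel k n h})) (MvPolynomial.X 2) from rfl]
  simp only [danRel]
  exact sub_eq_zero.mp ((sub_sub _ _ _).symm.trans h1)

lemma danC_aeval (g : Polynomial k) :
    aeval (C (dx k n h) : Polynomial (DanRing k n h)) g = C (aeval (dx k n h) g) :=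
  Polynomial.aeval_algHom_apply (Polynomial.CAlgHom (R := k) (A := DanRing k n h))
    (dx k n h) g

lemma danPsi_rel : danPsi k n h f (danRel k n h) = 0 := by
  have rel' : (C (dx k n h)) ^ n * C (dy k n h)
      = (C (dz k n h)) ^ 2 + C (aeval (dx k n h) h) * C (dz k n h) := by
    rw [← map_pow, ← map_mul, ← map_pow, ← map_mul, ← map_add, dan_rel]
  show danPsi k n h f (MvPolynomial.X 0 ^ n * MvPolynomial.X 1 - MvPolynomial.X 2 ^ 2
    - Polynomial.aeval (MvPolynomial.X 0 : MvPolynomial (Fin 3) k) h * MvPolynomial.X 2) = 0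
  rw [map_sub, map_sub, map_mul, map_pow, map_pow, map_mul,
    ← Polynomial.aeval_algHom_apply, danPsi_X0, danPsi_X1, danPsi_X2, danC_aeval]
  simp only [map_mul, map_add, map_pow, map_ofNat]
  linear_combination rel'

/-- the exponential map -/
def danPhi : DanRing k n h →ₐ[k] Polynomial (DanRing k n h) :=
  Ideal.Quotient.liftₐ _ (danPsi k n h f) (by
    intro a ha
    rw [Ideal.mem_span_singleton] at ha
    obtain ⟨r, rfl⟩ := ha
    rw [map_mul, danPsi_rel, zero_mul])

lemma danPhi_mk (p : MvPolynomial (Fin 3) k) :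
    danPhi k n h f (Ideal.Quotient.mk _ p) = danPsi k n h f p := by
  simp [danPhi, Ideal.Quotient.liftₐ_apply, Ideal.Quotient.lift_mk]
  exact Ideal.Quotient.lift_mk _ _ _

lemma danPhi_x : danPhi k n h f (dx k n h) = C (dx k n h) :=
  (danPhi_mk k n h f _).trans (danPsi_X0 k n h f)

lemma danPhi_y : danPhi k n h f (dy k n h) =
    C (dy k n h) + C ((2 * dz k n h + aeval (dx k n h) h) * aeval (dx k n h) f) * X
      + C (dx k n h ^ n * aeval (dx k n h) f ^ 2) * X ^ 2 :=
  (danPhi_mk k n h f _).trans (danPsi_X1 k n h f)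

lemma danPhi_z : danPhi k n h f (dz k n h) =
    C (dz k n h) + C (dx k n h ^ n * aeval (dx k n h) f) * X :=
  (danPhi_mk k n h f _).trans (danPsi_X2 k n h f)

lemma danPhi_aeval (g : Polynomial k) :
    danPhi k n h f (aeval (dx k n h) g) = C (aeval (dx k n h) g) := by
  rw [← Polynomial.aeval_algHom_apply (danPhi k n h f), danPhi_x, danC_aeval]

lemma danPhi_comp_x :
    Polynomial.mapAlgHom (danPhi k n h f) (danPhi k n h f (dx k n h))
      = Polynomial.aeval (X + C X : Polynomial (Polynomial (DanRing k n h)))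
          (danPhi k n h f (dx k n h)) := by
  rw [danPhi_x]
  simp [Polynomial.coe_mapAlgHom, Polynomial.algebraMap_apply, danPhi_x]

lemma danPhi_comp_z :
    Polynomial.mapAlgHom (danPhi k n h f) (danPhi k n h f (dz k n h))
      = Polynomial.aeval (X + C X : Polynomial (Polynomial (DanRing k n h)))
          (danPhi k n h f (dz k n h)) := by
  rw [danPhi_z]
  simp only [Polynomial.coe_mapAlgHom, Polynomial.map_add, Polynomial.map_mul,
    Polynomial.map_C, Polynomial.map_X, RingHom.coe_coe, AlgHom.coe_coe, map_add, map_mul, map_pow,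
    Polynomial.aeval_C, Polynomial.aeval_X, Polynomial.algebraMap_apply,
    Algebra.algebraMap_self, RingHom.id_apply, danPhi_x, danPhi_z, danPhi_aeval, map_ofNat]
  letI : CommRing (Polynomial (Polynomial (DanRing k n h))) := @Polynomial.commRing _ Polynomial.commRing
  ring

lemma danPhi_comp_y :
    Polynomial.mapAlgHom (danPhi k n h f) (danPhi k n h f (dy k n h))
      = Polynomial.aeval (X + C X : Polynomial (Polynomial (DanRing k n h)))
          (danPhi k n h f (dy k n h)) := by
  rw [danPhi_y]
  simp only [Polynomial.coe_mapAlgHom, Polynomial.map_add, Polynomial.map_mul,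
    Polynomial.map_C, Polynomial.map_X, Polynomial.map_pow, RingHom.coe_coe, AlgHom.coe_coe, map_add,
    map_mul, map_pow, Polynomial.aeval_C, Polynomial.aeval_X, Polynomial.algebraMap_apply,
    Algebra.algebraMap_self, RingHom.id_apply, danPhi_x, danPhi_y, danPhi_z, danPhi_aeval,
    map_ofNat]
  letI : CommRing (Polynomial (Polynomial (DanRing k n h))) := @Polynomial.commRing _ Polynomial.commRing
  ring

end Aux

open Polynomial in
/-- For any `f ∈ k[X]`, the assignment `x ↦ x`, `z ↦ z + xⁿf(x)U`,
`y ↦ y + (2z + h(x))f(x)U + xⁿf(x)²U²` defines an exponential map on `R`. -/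
theorem stmt_10 (k : Type*) [Field k] (n : ℕ) (hn : 2 ≤ n)
    (h : Polynomial k) (h0 : h.coeff 0 ≠ 0) (f : Polynomial k) :
    ∃ φ : DanRing k n h →ₐ[k] Polynomial (DanRing k n h), IsExpMap φ ∧
      φ (dx k n h) = Polynomial.C (dx k n h) ∧
      φ (dz k n h) = Polynomial.C (dz k n h) +
        Polynomial.C (dx k n h ^ n * Polynomial.aeval (dx k n h) f) * Polynomial.X ∧
      φ (dy k n h) = Polynomial.C (dy k n h) +
        Polynomial.C ((2 * dz k n h + Polynomial.aeval (dx k n h) h) *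
          Polynomial.aeval (dx k n h) f) * Polynomial.X +
        Polynomial.C (dx k n h ^ n * Polynomial.aeval (dx k n h) f ^ 2) *
          Polynomial.X ^ 2 := by
  refine ⟨danPhi k n h f, ⟨?_, ?_⟩, danPhi_x k n h f, danPhi_z k n h f, danPhi_y k n h f⟩
  · have hcomp : ((Polynomial.aeval (0 : DanRing k n h)).restrictScalars k).comp (danPhi k n h f)
        = AlgHom.id k (DanRing k n h) := by
      apply Ideal.Quotient.algHom_ext
      apply MvPolynomial.algHom_ext
      intro i
      fin_cases i <;>
        simp [Ideal.Quotient.mkₐ_eq_mk, danPhi_mk, danPsi_X0, danPsi_X1, danPsi_X2,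
          dx, dy, dz]
    intro a
    have := DFunLike.congr_fun hcomp a
    simpa [Polynomial.coe_aeval_eq_eval] using this
  · have hmap : algebraMap (DanRing k n h) (Polynomial (Polynomial (DanRing k n h)))
        = (Polynomial.C).comp Polynomial.C := by
      refine RingHom.ext fun a => ?_
      simp [Polynomial.algebraMap_apply]
    have hcomp : (Polynomial.mapAlgHom (danPhi k n h f)).comp (danPhi k n h f)
        = ((Polynomial.aeval (Polynomial.X + Polynomial.C Polynomial.X
            : Polynomial (Polynomial (DanRing k n h)))).restrictScalars k).comp
          (danPhi k n h f) := by
      apply Ideal.Quotient.algHom_ext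
      apply MvPolynomial.algHom_ext
      intro i
      fin_cases i
      · exact danPhi_comp_x k n h f
      · exact danPhi_comp_y k n h f
      · exact danPhi_comp_z k n h f
    intro a
    have := DFunLike.congr_fun hcomp a
    rw [AlgHom.comp_apply, AlgHom.comp_apply, AlgHom.restrictScalars_apply,
      Polynomial.coe_mapAlgHom, Polynomial.aeval_def, hmap] at this
    rw [AlgHom.toRingHom_eq_coe]
    exact this
end
end

section
/- Let k be a field, n ≥ 2, h ∈ k[X] with h(0) ≠ 0 and deg h < n, and R = k[X,Y,Z]/(XⁿY - Z² - h(X)Z). For any f ∈ k[X], the map E_f defined by E_f(x) = x, E_f(y) = y + 2f(x)z + xⁿf(x)² + f(x)h(x), E_f(z) = z + xⁿf(x) is a k-algebra automorphism of R. -/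
noncomputable section

/-! The substitutions `E_f` preserve the defining polynomial `XⁿY - Z² - h(X)Z` of `R`, since
`(Z + Xⁿf)² + h(Z + Xⁿf) = Z² + hZ + Xⁿ(2fZ + Xⁿf² + fh)`. They also satisfy
`E_f ∘ E_g = E_{f+g}` already on `k[X,Y,Z]`, so `E_{-f}` inverts `E_f`. -/

namespace Danielewski

open MvPolynomial

section CommRing

variable {k : Type*} [CommRing k] (n : ℕ) (h : Polynomial k)

def shearImages (f : Polynomial k) : Fin 3 → MvPolynomial (Fin 3) k :=
  ![X 0,
    X 1 + 2 * Polynomial.aeval (X 0) f * X 2 + X 0 ^ n * Polynomial.aeval (X 0) f ^ 2 +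
      Polynomial.aeval (X 0) f * Polynomial.aeval (X 0) h,
    X 2 + X 0 ^ n * Polynomial.aeval (X 0) f]

def shear (f : Polynomial k) : MvPolynomial (Fin 3) k →ₐ[k] MvPolynomial (Fin 3) k :=
  aeval (shearImages n h f)

variable (f : Polynomial k)

@[simp] lemma shear_X_zero : shear n h f (X 0) = X 0 := by
  simp [shear, shearImages]

@[simp] lemma shear_X_one :
    shear n h f (X 1) = X 1 + 2 * Polynomial.aeval (X 0) f * X 2 +
      X 0 ^ n * Polynomial.aeval (X 0) f ^ 2 +
      Polynomial.aeval (X 0) f * Polynomial.aeval (X 0) h := by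
  simp [shear, shearImages]

@[simp] lemma shear_X_two : shear n h f (X 2) = X 2 + X 0 ^ n * Polynomial.aeval (X 0) f := by
  simp [shear, shearImages]

@[simp] lemma shear_aeval_X_zero (g : Polynomial k) :
    shear n h f (Polynomial.aeval (X 0) g) = Polynomial.aeval (X 0) g := by
  rw [← Polynomial.aeval_algHom_apply, shear_X_zero]

lemma shear_comp (g : Polynomial k) : (shear n h f).comp (shear n h g) = shear n h (f + g) := by
  apply algHom_ext
  intro i
  fin_cases i <;>
    simp only [AlgHom.comp_apply, Fin.zero_eta, Fin.mk_one, Fin.reduceFinMk, shear_X_zero,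
      shear_X_one, shear_X_two, map_add, map_mul, map_pow, map_ofNat, shear_aeval_X_zero] <;>
    ring

lemma shear_zero : shear n h 0 = AlgHom.id k (MvPolynomial (Fin 3) k) := by
  apply algHom_ext
  intro i
  fin_cases i <;> simp

def shearEquiv : MvPolynomial (Fin 3) k ≃ₐ[k] MvPolynomial (Fin 3) k :=
  AlgEquiv.ofAlgHom (shear n h f) (shear n h (-f))
    (by rw [shear_comp, add_neg_cancel, shear_zero])
    (by rw [shear_comp, neg_add_cancel, shear_zero])

end CommRing

section Field

variable {k : Type*} [Field k] (n : ℕ) (h f : Polynomial k)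

lemma shear_danRel : shear n h f (danRel k n h) = danRel k n h := by
  simp only [danRel, map_sub, map_mul, map_pow, shear_X_zero, shear_X_one, shear_X_two,
    shear_aeval_X_zero]
  ring

def danAut : DanRing k n h ≃ₐ[k] DanRing k n h :=
  Ideal.quotientEquivAlg _ _ (shearEquiv n h f) <| by
    rw [Ideal.map_span, Set.image_singleton]
    exact congrArg (fun r => Ideal.span {r}) (shear_danRel n h f).symm

lemma danAut_mk (a : MvPolynomial (Fin 3) k) :
    danAut n h f (Ideal.Quotient.mk _ a) = Ideal.Quotient.mk _ (shear n h f a) :=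
  rfl

lemma aeval_dx (g : Polynomial k) :
    Polynomial.aeval (dx k n h) g = Ideal.Quotient.mk _ (Polynomial.aeval (X 0) g) := by
  rw [dx, ← Ideal.Quotient.mkₐ_eq_mk k, Polynomial.aeval_algHom_apply]

end Field

end Danielewski

open Danielewski in
theorem stmt_12_general (k : Type*) [Field k] (n : ℕ)
    (h : Polynomial k)
    (f : Polynomial k) :
    ∃ E : DanRing k n h ≃ₐ[k] DanRing k n h,
      E (dx k n h) = dx k n h ∧
      E (dy k n h) = dy k n h + 2 * Polynomial.aeval (dx k n h) f * dz k n h +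
        dx k n h ^ n * Polynomial.aeval (dx k n h) f ^ 2 +
        Polynomial.aeval (dx k n h) f * Polynomial.aeval (dx k n h) h ∧
      E (dz k n h) = dz k n h + dx k n h ^ n * Polynomial.aeval (dx k n h) f := by
  refine ⟨danAut n h f, ?_, ?_, ?_⟩
  · rw [dx, danAut_mk, shear_X_zero]
  · simp only [dy, dz, danAut_mk, shear_X_one, map_add, map_mul, map_pow, map_ofNat, aeval_dx]
    rfl
  · simp only [dz, danAut_mk, shear_X_two, map_add, map_mul, map_pow, aeval_dx]
    rfl

/-- For any `f ∈ k[X]`, the map `E_f : x ↦ x`, `y ↦ y + 2f(x)z + xⁿf(x)² + f(x)h(x)`,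
`z ↦ z + xⁿf(x)` is a `k`-algebra automorphism of `R`. -/
theorem stmt_12 (k : Type*) [Field k] (n : ℕ) (hn : 2 ≤ n)
    (h : Polynomial k) (h0 : h.coeff 0 ≠ 0) (hdeg : h.natDegree < n)
    (f : Polynomial k) :
    ∃ E : DanRing k n h ≃ₐ[k] DanRing k n h,
      E (dx k n h) = dx k n h ∧
      E (dy k n h) = dy k n h + 2 * Polynomial.aeval (dx k n h) f * dz k n h +
        dx k n h ^ n * Polynomial.aeval (dx k n h) f ^ 2 +
        Polynomial.aeval (dx k n h) f * Polynomial.aeval (dx k n h) h ∧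
      E (dz k n h) = dz k n h + dx k n h ^ n * Polynomial.aeval (dx k n h) f :=
  stmt_12_general k n h f
end
end

section
/- Let k be a field, n ≥ 2, h ∈ k[X] with h(0) ≠ 0 and deg h < n, and R = k[X,Y,Z]/(XⁿY - Z² - h(X)Z). Let μ ∈ k* satisfy h(μX) = h(X). Then the map L_μ defined by L_μ(x) = μx, L_μ(y) = μ^{-n}y, L_μ(z) = z is a k-algebra automorphism of R. -/
noncomputable section

/-! The substitution `X ↦ μX, Y ↦ μ⁻ⁿY, Z ↦ Z` is an automorphism of `k[X,Y,Z]` (with inverse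
the substitution for `μ⁻¹`), and it fixes `XⁿY - Z² - h(X)Z` because `h(μX) = h(X)`; hence it
descends to an automorphism of `R`. -/

namespace MvPolynomial

variable {R σ : Type*} [CommSemiring R]

def scaleVars (c : σ → Rˣ) : MvPolynomial σ R ≃ₐ[R] MvPolynomial σ R :=
  AlgEquiv.ofAlgHom (aeval fun i ↦ (c i : R) • X i) (aeval fun i ↦ (c⁻¹ i : R) • X i)
    (algHom_ext fun i ↦ by simp [smul_smul]) (algHom_ext fun i ↦ by simp [smul_smul])

@[simp]
theorem scaleVars_X (c : σ → Rˣ) (i : σ) : scaleVars c (X i) = (c i : R) • X i :=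
  aeval_X _ i

end MvPolynomial

open MvPolynomial in
theorem scaleVars_danRel {k : Type*} [Field k] (n : ℕ) (h : Polynomial k) (u : kˣ)
    (hinv : h.comp (Polynomial.C (u : k) * Polynomial.X) = h) :
    scaleVars ![u, u⁻¹ ^ n, 1] (danRel k n h) = danRel k n h := by
  have h_scaled : scaleVars ![u, u⁻¹ ^ n, 1] (Polynomial.aeval (X 0) h) =
      Polynomial.aeval (X 0 : MvPolynomial (Fin 3) k) h := by
    conv_rhs => rw [← hinv]
    simp [← Polynomial.aeval_algHom_apply, Polynomial.aeval_comp, Algebra.smul_def]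
  simp only [danRel, map_sub, map_mul, map_pow, h_scaled, scaleVars_X]
  simp [smul_pow, smul_smul]

theorem stmt_14_general (k : Type*) [Field k] (n : ℕ)
    (h : Polynomial k)
    (μ : k) (hμ : μ ≠ 0)
    (hinv : h.comp (Polynomial.C μ * Polynomial.X) = h) :
    ∃ L : DanRing k n h ≃ₐ[k] DanRing k n h,
      L (dx k n h) = algebraMap k (DanRing k n h) μ * dx k n h ∧
      L (dy k n h) = algebraMap k (DanRing k n h) (μ⁻¹ ^ n) * dy k n h ∧
      L (dz k n h) = dz k n h := by
  set u := Units.mk0 μ hμ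
  have h_map : Ideal.span {danRel k n h} =
      (Ideal.span {danRel k n h}).map (MvPolynomial.scaleVars ![u, u⁻¹ ^ n, 1] : _ →+* _) := by
    rw [Ideal.map_span, Set.image_singleton, RingHom.coe_coe, scaleVars_danRel n h u hinv]
  refine ⟨Ideal.quotientEquivAlg _ _ _ h_map, ?_, ?_, ?_⟩ <;>
    simp only [dx, dy, dz, Ideal.quotientEquivAlg_mk, MvPolynomial.scaleVars_X,
      Algebra.smul_def, map_mul, Ideal.Quotient.mk_algebraMap] <;>
    simp [u]

/-- For `μ ∈ k*` with `h(μX) = h(X)`, the map `L_μ : x ↦ μx`, `y ↦ μ⁻ⁿy`, `z ↦ z`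
is a `k`-algebra automorphism of `R`. -/
theorem stmt_14 (k : Type*) [Field k] (n : ℕ) (hn : 2 ≤ n)
    (h : Polynomial k) (h0 : h.coeff 0 ≠ 0) (hdeg : h.natDegree < n)
    (μ : k) (hμ : μ ≠ 0)
    (hinv : h.comp (Polynomial.C μ * Polynomial.X) = h) :
    ∃ L : DanRing k n h ≃ₐ[k] DanRing k n h,
      L (dx k n h) = algebraMap k (DanRing k n h) μ * dx k n h ∧
      L (dy k n h) = algebraMap k (DanRing k n h) (μ⁻¹ ^ n) * dy k n h ∧
      L (dz k n h) = dz k n h :=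
  stmt_14_general k n h μ hμ hinv
end
end
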